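/- arXiv:2502.15513 — 2 statements merged into one kernel-verified Lean document; each statement's English description precedes it below -/
import Mathlib

section
/- For all n ≥ 3, the only subspaces of F_2^n stable under the natural coordinate-permutation action of the symmetric group S_n are: the zero subspace, all of F_2^n, the span of the all-ones vector, and V_E = { v : |supp(v)| even }. -/
/-!
An `Sₙ`-stable subspace `W` either consists of constant vectors, and is then `0` or the line
through `1`, or it contains a vector `v` with `v i ≠ v j`. In the latter case
`v - v ∘ (i j) = (v i - v j) • (eᵢ - eⱼ)`, so `eᵢ - eⱼ ∈ W`, and by double transitivity of `Sₙ`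
every `eₐ - e_b` lies in `W`. These vectors span the hyperplane of vectors with coordinate sum
zero, so `W` is that hyperplane or the whole space. Over `𝔽₂` a vector has coordinate sum zero
exactly when its support is even.
-/

open Finset

variable {K ι : Type*}

lemma Equiv.Perm.exists_apply_eq_and_apply_eq [DecidableEq ι] {a b i j : ι} (hab : a ≠ b)
    (hij : i ≠ j) : ∃ σ : Perm ι, σ a = i ∧ σ b = j := by
  have hb : swap a i b ≠ i := fun h =>
    hab ((swap a i).injective (h.trans (swap_apply_left a i).symm)).symm
  refine ⟨swap (swap a i b) j * swap a i, ?_, by simp⟩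
  simp only [Perm.mul_apply, swap_apply_left]
  exact swap_apply_of_ne_of_ne hb.symm hij

lemma ZMod.sum_eq_zero_iff_even_card [Fintype ι] (v : ι → ZMod 2) :
    ∑ i, v i = 0 ↔ Even (univ.filter fun i => v i ≠ 0).card := by
  rw [← ZMod.natCast_eq_zero_iff_even, natCast_card_filter]
  congr! 2 with i
  generalize v i = x
  revert x
  decide

namespace Submodule

variable [DivisionRing K]

def IsPermStable (W : Submodule K (ι → K)) : Prop :=
  ∀ σ : Equiv.Perm ι, ∀ v ∈ W, (fun i => v (σ i)) ∈ W

lemma eq_bot_or_eq_span_singleton_of_le {V : Type*} [AddCommGroup V] [Module K V]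
    {W : Submodule K V} {x : V} (h : W ≤ span K {x}) : W = ⊥ ∨ W = span K {x} := by
  rcases eq_or_ne x 0 with rfl | hx
  · simpa using h
  · exact (nonzero_span_atom x hx).le_iff.mp h

variable {W : Submodule K (ι → K)}

lemma le_span_one_of_forall_apply_eq (h : ∀ v ∈ W, ∀ i j, v i = v j) : W ≤ span K {1} := by
  intro v hv
  rw [mem_span_singleton]
  rcases isEmpty_or_nonempty ι with hι | ⟨⟨i⟩⟩
  · exact ⟨0, Subsingleton.elim _ _⟩
  · exact ⟨v i, funext fun j => by simp [h v hv i j]⟩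

variable [DecidableEq ι]

lemma single_sub_single_mem_of_apply_ne (hW : W.IsPermStable) {v : ι → K} (hv : v ∈ W)
    {i j : ι} (hvij : v i ≠ v j) : Pi.single i 1 - Pi.single j 1 ∈ W := by
  have hij : i ≠ j := ne_of_apply_ne v hvij
  have hswap : v - (fun k => v (Equiv.swap i j k)) =
      (v i - v j) • (Pi.single i 1 - Pi.single j 1) := by
    funext k
    rcases eq_or_ne k i with rfl | hki
    · simp [hij]
    rcases eq_or_ne k j with rfl | hkj
    · simp [hki]
    · simp [Equiv.swap_apply_of_ne_of_ne hki hkj, hki, hkj]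
  have h := W.smul_mem (v i - v j)⁻¹ (W.sub_mem hv (hW (Equiv.swap i j) v hv))
  rwa [hswap, smul_smul, inv_mul_cancel₀ (sub_ne_zero.2 hvij), one_smul] at h

lemma single_sub_single_mem (hW : W.IsPermStable) {i j : ι}
    (h : Pi.single i 1 - Pi.single j 1 ∈ W) (hij : i ≠ j) {a b : ι} (hab : a ≠ b) :
    Pi.single a 1 - Pi.single b 1 ∈ W := by
  obtain ⟨σ, rfl, rfl⟩ := Equiv.Perm.exists_apply_eq_and_apply_eq hab hij
  convert hW σ _ h using 1
  funext k
  simp [Pi.single_apply]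

variable [Fintype ι]

lemma ker_sumCoords_le (j : ι) (h : ∀ i, Pi.single i 1 - Pi.single j 1 ∈ W) :
    LinearMap.ker (Pi.basisFun K ι).sumCoords ≤ W := by
  intro v hv
  have hv : ∑ i, v i = 0 := by simpa using hv
  have hdecomp : v = ∑ i, v i • (Pi.single i 1 - Pi.single j 1 : ι → K) := by
    simp only [smul_sub, sum_sub_distrib, ← sum_smul, hv, zero_smul, sub_zero]
    exact pi_eq_sum_univ' v
  rw [hdecomp]
  exact sum_mem fun i _ => W.smul_mem _ (h i)

theorem IsPermStable.eq_bot_or_span_one_or_ker_sumCoords_or_top (hW : W.IsPermStable) :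
    W = ⊥ ∨ W = span K {1} ∨ W = LinearMap.ker (Pi.basisFun K ι).sumCoords ∨ W = ⊤ := by
  by_cases hconst : ∀ v ∈ W, ∀ i j, v i = v j
  · rcases eq_bot_or_eq_span_singleton_of_le (le_span_one_of_forall_apply_eq hconst) with h | h <;>
      simp [h]
  push Not at hconst
  obtain ⟨v, hv, i, j, hvij⟩ := hconst
  have hij : i ≠ j := ne_of_apply_ne v hvij
  have hker : LinearMap.ker (Pi.basisFun K ι).sumCoords ≤ W := by
    refine ker_sumCoords_le j fun a => ?_
    rcases eq_or_ne a j with rfl | haj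
    · simp
    · exact single_sub_single_mem hW (single_sub_single_mem_of_apply_ne hW hv hvij) hij haj
  have hsurj : Function.Surjective (Pi.basisFun K ι).sumCoords :=
    fun c => ⟨Pi.single i c, by simp⟩
  rcases (LinearMap.isCoatom_ker_of_surjective hsurj).le_iff.mp hker with h | h <;> simp [h]

end Submodule

theorem stmt4_general (n : ℕ) (W : Submodule (ZMod 2) (Fin n → ZMod 2))
    (hW : ∀ σ : Equiv.Perm (Fin n), ∀ v ∈ W, (fun i => v (σ i)) ∈ W) :
    W = ⊥ ∨ W = ⊤ ∨ W = Submodule.span (ZMod 2) {fun _ => 1} ∨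
      (W : Set (Fin n → ZMod 2)) =
        {v | Even (Finset.univ.filter fun i => v i ≠ 0).card} := by
  rcases Submodule.IsPermStable.eq_bot_or_span_one_or_ker_sumCoords_or_top hW with h | h | h | h
  · exact Or.inl h
  · exact Or.inr (Or.inr (Or.inl h))
  · refine Or.inr (Or.inr (Or.inr ?_))
    ext v
    simp [h, ZMod.sum_eq_zero_iff_even_card]
  · exact Or.inr (Or.inl h)

theorem stmt4 (n : ℕ) (hn : 3 ≤ n) (W : Submodule (ZMod 2) (Fin n → ZMod 2))
    (hW : ∀ σ : Equiv.Perm (Fin n), ∀ v ∈ W, (fun i => v (σ i)) ∈ W) :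
    W = ⊥ ∨ W = ⊤ ∨ W = Submodule.span (ZMod 2) {fun _ => 1} ∨
      (W : Set (Fin n → ZMod 2)) =
        {v | Even (Finset.univ.filter fun i => v i ≠ 0).card} :=
  stmt4_general n W hW
end

section
/- For all n ≥ 3, the only subspaces of F_2^n stable under the natural coordinate-permutation action of the alternating group A_n are the zero subspace, F_2^n, the span of the all-ones vector, and V_E = { v : |supp(v)| even }. -/
/-!
If `W` contains a non-constant vector `v`, pick `x, y, z` with `v x = v y ≠ v z`; for the
3-cycle `σ : x ↦ y ↦ z ↦ x` the vector `v + v ∘ σ` is `e_y + e_z`. Since `A_n` (`n ≥ 3`) is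
transitive on 2-subsets, `W` then contains every `e_p + e_q`, and these span the even-weight
hyperplane `V_E`, so `W = V_E` or `W = F_2^n`. Otherwise `W` consists of constant vectors and
lies in the line spanned by the all-ones vector.
-/

open Finset Equiv Equiv.Perm
open scoped Pointwise

variable {α : Type*}

section EvenWeight

variable [Fintype α]

variable (α) in
def evenWeight : Submodule (ZMod 2) (α → ZMod 2) :=
  LinearMap.ker (∑ i, LinearMap.proj i)

lemma mem_evenWeight {v : α → ZMod 2} : v ∈ evenWeight α ↔ ∑ i, v i = 0 := by
  simp [evenWeight]

lemma sum_eq_card_support (v : α → ZMod 2) : ∑ i, v i = #{i | v i ≠ 0} := by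
  rw [← sum_filter_ne_zero, card_eq_sum_ones, Nat.cast_sum, Nat.cast_one]
  have h : ∀ a : ZMod 2, a ≠ 0 → a = 1 := by decide
  exact sum_congr rfl fun i hi => h _ (mem_filter.mp hi).2

lemma coe_evenWeight : (evenWeight α : Set (α → ZMod 2)) = {v | Even #{i | v i ≠ 0}} := by
  ext v
  simp [mem_evenWeight, sum_eq_card_support, ZMod.natCast_eq_zero_iff_even]

lemma isCoatom_evenWeight [Nonempty α] : IsCoatom (evenWeight α) := by
  classical
  refine LinearMap.isCoatom_ker_of_surjective fun c => ?_
  obtain ⟨i⟩ := ‹Nonempty α›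
  exact ⟨Pi.single i c, by simp⟩

end EvenWeight

section PairVec

variable [DecidableEq α]

def pairVec (p q : α) : α → ZMod 2 := Pi.single p 1 + Pi.single q 1

lemma pairVec_self (p : α) : pairVec p p = 0 := funext fun _ => CharTwo.add_self_eq_zero _

lemma pairVec_of_ne {p q : α} (h : p ≠ q) :
    pairVec p q = fun x => if x ∈ ({p, q} : Finset α) then 1 else 0 := by
  funext x
  by_cases hp : x = p <;> by_cases hq : x = q <;> simp_all [pairVec]

lemma pairVec_comp_of_smul_eq {σ : Perm α} {a b p q : α} (hab : a ≠ b) (hpq : p ≠ q)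
    (hσ : σ • ({a, b} : Finset α) = {p, q}) : (fun x => pairVec p q (σ x)) = pairVec a b := by
  funext x
  rw [pairVec_of_ne hab, pairVec_of_ne hpq, ← hσ]
  simp only [← Perm.smul_def, smul_mem_smul_finset_iff]

lemma add_comp_threeCycle_eq_pairVec {v : α → ZMod 2} {x y z : α} (hxy : x ≠ y) (hxz : x ≠ z)
    (hyz : y ≠ z) (hvxy : v x = v y) (hvyz : v y ≠ v z) :
    v + (fun w => v ((swap y x * swap y z) w)) = pairVec y z := by
  have add_eq_one : ∀ a b : ZMod 2, a ≠ b → a + b = 1 := by decide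
  funext w
  simp only [Pi.add_apply, Perm.mul_apply, pairVec, Pi.single_apply]
  by_cases hy : w = y
  · subst hy; simp [swap_apply_of_ne_of_ne hyz.symm hxz.symm, hyz, add_eq_one _ _ hvyz]
  by_cases hz : w = z
  · subst hz; simp [hyz.symm, hvxy, add_eq_one _ _ hvyz.symm]
  by_cases hx : w = x
  · subst hx; simp [swap_apply_of_ne_of_ne hxy hxz, hxy, hxz, hvxy, CharTwo.add_self_eq_zero]
  · simp [swap_apply_of_ne_of_ne hy hz, swap_apply_of_ne_of_ne hy hx, hy, hz,
      CharTwo.add_self_eq_zero]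

variable [Fintype α]

lemma sum_smul_pairVec (u : α → ZMod 2) (j : α) :
    ∑ i, u i • pairVec i j = u + (∑ i, u i) • Pi.single j 1 := by
  simp only [pairVec, smul_add, sum_add_distrib, ← sum_smul]
  congr 1
  simp only [← Pi.single_smul', smul_eq_mul, mul_one, univ_sum_single]

lemma evenWeight_le_of_forall_pairVec_mem [Nonempty α] {W : Submodule (ZMod 2) (α → ZMod 2)}
    (hW : ∀ p q, pairVec p q ∈ W) : evenWeight α ≤ W := by
  intro u hu
  obtain ⟨j⟩ := ‹Nonempty α›
  have hu_eq : u = ∑ i, u i • pairVec i j := by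
    rw [sum_smul_pairVec, mem_evenWeight.mp hu, zero_smul, add_zero]
  rw [hu_eq]
  exact W.sum_mem fun i _ => W.smul_mem _ (hW i j)

lemma exists_mem_alternatingGroup_smul_pair (hα : 3 ≤ Fintype.card α) {a b p q : α}
    (hab : a ≠ b) (hpq : p ≠ q) :
    ∃ σ ∈ alternatingGroup α, σ • ({a, b} : Finset α) = {p, q} := by
  have := Set.powersetCard.isPretransitive_alternatingGroup (α := α) (n := 2)
    (by rwa [Nat.card_eq_fintype_card])
  obtain ⟨σ, hσ⟩ := MulAction.exists_smul_eq (alternatingGroup α)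
    (Set.powersetCard.ofCard (card_pair hab)) (Set.powersetCard.ofCard (card_pair hpq))
  exact ⟨σ, σ.2, congrArg Subtype.val hσ⟩

end PairVec

section Stable

variable {W : Submodule (ZMod 2) (α → ZMod 2)}

lemma eq_bot_or_eq_span_one_of_forall_const [Nonempty α] (hW : ∀ v ∈ W, ∀ i j, v i = v j) :
    W = ⊥ ∨ W = Submodule.span (ZMod 2) {fun _ => 1} := by
  obtain ⟨i⟩ := ‹Nonempty α›
  refine (nonzero_span_atom _ (Function.ne_iff.mpr ⟨i, one_ne_zero⟩)).le_iff.mp fun v hv => ?_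
  exact Submodule.mem_span_singleton.mpr ⟨v i, funext fun j => by simp [hW v hv i j]⟩

variable [Fintype α] [DecidableEq α]

lemma exists_pairVec_mem (hα : 3 ≤ Fintype.card α)
    (hW : ∀ σ ∈ alternatingGroup α, ∀ v ∈ W, (fun i => v (σ i)) ∈ W)
    {v : α → ZMod 2} (hv : v ∈ W) {i j : α} (hij : v i ≠ v j) :
    ∃ p q, p ≠ q ∧ pairVec p q ∈ W := by
  have hij' : i ≠ j := fun h => hij (congrArg v h)
  obtain ⟨k, -, hk⟩ := exists_mem_notMem_of_card_lt_card (s := {i, j}) (t := univ)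
    (card_le_two.trans_lt hα)
  simp only [mem_insert, mem_singleton, not_or] at hk
  have hmem : ∀ {x y z}, x ≠ y → x ≠ z → y ≠ z → v x = v y → v y ≠ v z → pairVec y z ∈ W :=
    fun hxy hxz hyz hvxy hvyz => add_comp_threeCycle_eq_pairVec hxy hxz hyz hvxy hvyz ▸
      W.add_mem hv (hW _ (isThreeCycle_swap_mul_swap_same hxy.symm hyz hxz).mem_alternatingGroup
        v hv)
  have two_valued : ∀ a b c : ZMod 2, a ≠ b → c = a ∨ c = b := by decide
  rcases two_valued _ _ (v k) hij with h | h
  · exact ⟨i, j, hij', hmem hk.1 hk.2 hij' h hij⟩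
  · exact ⟨j, i, hij'.symm, hmem hk.2 hk.1 hij'.symm h hij.symm⟩

lemma pairVec_mem_of_pairVec_mem (hα : 3 ≤ Fintype.card α)
    (hW : ∀ σ ∈ alternatingGroup α, ∀ v ∈ W, (fun i => v (σ i)) ∈ W)
    {p q : α} (hpq : p ≠ q) (h : pairVec p q ∈ W) (a b : α) : pairVec a b ∈ W := by
  rcases eq_or_ne a b with rfl | hab
  · rw [pairVec_self]
    exact W.zero_mem
  obtain ⟨σ, hσ, hσab⟩ := exists_mem_alternatingGroup_smul_pair hα hab hpq
  rw [← pairVec_comp_of_smul_eq hab hpq hσab]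
  exact hW σ hσ _ h

end Stable

theorem stmt5 (n : ℕ) (hn : 3 ≤ n) (W : Submodule (ZMod 2) (Fin n → ZMod 2))
    (hW : ∀ σ ∈ alternatingGroup (Fin n), ∀ v ∈ W, (fun i => v (σ i)) ∈ W) :
    W = ⊥ ∨ W = ⊤ ∨ W = Submodule.span (ZMod 2) {fun _ => 1} ∨
      (W : Set (Fin n → ZMod 2)) =
        {v | Even (Finset.univ.filter fun i => v i ≠ 0).card} := by
  have : Nonempty (Fin n) := ⟨⟨0, by omega⟩⟩
  by_cases hconst : ∀ v ∈ W, ∀ i j, v i = v j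
  · rcases eq_bot_or_eq_span_one_of_forall_const hconst with h | h
    · exact Or.inl h
    · exact Or.inr (Or.inr (Or.inl h))
  push Not at hconst
  obtain ⟨v, hv, i, j, hij⟩ := hconst
  have hcard : 3 ≤ Fintype.card (Fin n) := by simpa using hn
  obtain ⟨p, q, hpq, hpqW⟩ := exists_pairVec_mem hcard hW hv hij
  have hE := evenWeight_le_of_forall_pairVec_mem (pairVec_mem_of_pairVec_mem hcard hW hpq hpqW)
  rcases isCoatom_evenWeight.le_iff.mp hE with h | h
  · exact Or.inr (Or.inl h)
  · exact Or.inr (Or.inr (Or.inr (h ▸ coe_evenWeight)))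
end
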